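/- arXiv:2002.10862 — 2 statements merged into one kernel-verified Lean document; each statement's English description precedes it below -/
import Mathlib

section
/- Let ω ∈ W^{1,1}([a,b]) and define M : W^{1,1}([a,b]) → W^{1,1}([a,b]) by M_x(t) = max{ω(t), x(t)}. Then M is continuous with respect to the W^{1,1} norm. -/
open MeasureTheory Set Filter

/-- `f ∈ W^{1,1}([a,b])` with (a.e.) derivative `f'`. -/
def IsW11On (a b : ℝ) (f f' : ℝ → ℝ) : Prop :=
  IntegrableOn f' (Icc a b) ∧ ∀ t ∈ Icc a b, f t = f a + ∫ s in a..t, f' s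

/-!
A function lies in `W^{1,1}([a,b])` exactly when it is absolutely continuous there, so
`max ω x` lies in `W^{1,1}` with its a.e. derivative as weak derivative. That derivative is `x'`
where `ω < x` and `ω'` elsewhere; on the contact set `{ω = x}` also `ω' = x'` a.e., because
`max ω x - ω` has a local minimum at each contact point. Hence
`|(max ω xₙ)' - (max ω x₀)'| ≤ |xₙ' - x₀'| + |x₀' - ω'|` a.e., and at a.e. point the smaller
bound `|xₙ' - x₀'|` holds for all large `n`, since `xₙ → x₀` uniformly on `[a,b]`. Dominated
convergence applied to the excess over `|xₙ' - x₀'|` then gives `L¹` convergence of derivatives.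
-/

open Topology

theorem abs_ite_sub_ite_le (p q : Prop) [Decidable p] [Decidable q] (u v w : ℝ) :
    |(if p then u else w) - (if q then v else w)| ≤ |u - v| + |v - w| := by
  split_ifs
  · exact le_add_of_nonneg_right (abs_nonneg _)
  · exact abs_sub_le u v w
  · rw [abs_sub_comm]; exact le_add_of_nonneg_left (abs_nonneg _)
  · simp only [sub_self, abs_zero]; positivity

theorem deriv_max_of_le {f g : ℝ → ℝ} {f' t : ℝ} (hf : HasDerivAt f f' t)
    (hM : DifferentiableAt ℝ (fun s => max (f s) (g s)) t) (h : g t ≤ f t) :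
    deriv (fun s => max (f s) (g s)) t = f' := by
  have hmin : IsLocalMin (fun s => max (f s) (g s) - f s) t :=
    Eventually.of_forall fun s => by simp [max_eq_left h]
  linarith [hmin.hasDerivAt_eq_zero (hM.hasDerivAt.sub hf)]

theorem tendsto_integral_abs_sub_of_eventually_le {α : Type*} [MeasurableSpace α]
    {μ : Measure α} {F G : ℕ → α → ℝ} {F₀ G₀ H : α → ℝ}
    (hF : ∀ n, Integrable (F n) μ) (hF₀ : Integrable F₀ μ) (hG : ∀ n, Integrable (G n) μ)
    (hG₀ : Integrable G₀ μ) (hH : Integrable H μ)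
    (hbound : ∀ n, ∀ᵐ t ∂μ, |F n t - F₀ t| ≤ |G n t - G₀ t| + H t)
    (hev : ∀ᵐ t ∂μ, ∀ᶠ n in atTop, |F n t - F₀ t| ≤ |G n t - G₀ t|)
    (hlim : Tendsto (fun n => ∫ t, |G n t - G₀ t| ∂μ) atTop (𝓝 0)) :
    Tendsto (fun n => ∫ t, |F n t - F₀ t| ∂μ) atTop (𝓝 0) := by
  set e : ℕ → α → ℝ := fun n t => max (|F n t - F₀ t| - |G n t - G₀ t|) 0
  have he : ∀ n, Integrable (e n) μ := fun n =>
    (((hF n).sub hF₀).abs.sub ((hG n).sub hG₀).abs).pos_part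
  have hlim_e : Tendsto (fun n => ∫ t, e n t ∂μ) atTop (𝓝 0) := by
    refine integral_zero (α := α) ℝ ▸ tendsto_integral_of_dominated_convergence (fun t => |H t|)
      (fun n => (he n).aestronglyMeasurable) hH.abs (fun n => ?_) ?_
    · filter_upwards [hbound n] with t ht
      rw [Real.norm_of_nonneg (le_max_right _ _)]
      exact max_le (by linarith [le_abs_self (H t)]) (abs_nonneg _)
    · filter_upwards [hev] with t ht
      refine tendsto_const_nhds.congr' ?_
      filter_upwards [ht] with n hn
      exact (max_eq_right (by linarith)).symm
  refine squeeze_zero (fun n => integral_nonneg fun t => abs_nonneg _) (fun n => ?_)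
    (by simpa using hlim.add hlim_e)
  have hGn : Integrable (fun t => |G n t - G₀ t|) μ := ((hG n).sub hG₀).abs
  refine (integral_mono ((hF n).sub hF₀).abs (hGn.add (he n)) fun t => ?_).trans_eq
    (integral_add hGn (he n))
  simp only [Pi.add_apply, Pi.sub_apply, e]
  linarith [le_max_left (|F n t - F₀ t| - |G n t - G₀ t|) 0]

namespace AbsolutelyContinuousOnInterval

variable {f g : ℝ → ℝ} {a b : ℝ}

theorem congr (hf : AbsolutelyContinuousOnInterval f a b) (hfg : EqOn f g (uIcc a b)) :
    AbsolutelyContinuousOnInterval g a b := by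
  refine hf.congr' (eventually_inf_principal.2 (Eventually.of_forall fun E hE => ?_))
  exact Finset.sum_congr rfl fun i hi => by rw [hfg (hE.1 i hi).1, hfg (hE.1 i hi).2]

theorem max (hf : AbsolutelyContinuousOnInterval f a b)
    (hg : AbsolutelyContinuousOnInterval g a b) :
    AbsolutelyContinuousOnInterval (fun t => max (f t) (g t)) a b := by
  apply squeeze_zero (fun E => ?_) (fun E => ?_) (by simpa using Tendsto.add hf hg)
  · exact Finset.sum_nonneg fun i _ => dist_nonneg
  · rw [← Finset.sum_add_distrib]
    gcongr
    simp only [Real.dist_eq]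
    exact (abs_max_sub_max_le_max _ _ _ _).trans
      (max_le_add_of_nonneg (abs_nonneg _) (abs_nonneg _))

theorem isW11On_deriv (hab : a ≤ b) (hf : AbsolutelyContinuousOnInterval f a b) :
    IsW11On a b f (deriv f) := by
  refine ⟨(integrableOn_Icc_iff_integrableOn_Ioc).2
    ((intervalIntegrable_iff_integrableOn_Ioc_of_le hab).1 hf.intervalIntegrable_deriv), ?_⟩
  intro t ht
  rw [(hf.mono (uIcc_subset_uIcc left_mem_uIcc (Icc_subset_uIcc ht))).integral_deriv_eq_sub]
  ring

end AbsolutelyContinuousOnInterval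

namespace IsW11On

variable {a b : ℝ} {f f' g g' : ℝ → ℝ}

theorem intervalIntegrable (hf : IsW11On a b f f') {s t : ℝ} (hs : s ∈ Icc a b)
    (ht : t ∈ Icc a b) : IntervalIntegrable f' volume s t :=
  (hf.1.mono_set (uIcc_subset_Icc hs ht)).intervalIntegrable

theorem sub (hf : IsW11On a b f f') (hg : IsW11On a b g g') :
    IsW11On a b (f - g) (f' - g') := by
  refine ⟨hf.1.sub hg.1, fun t ht => ?_⟩
  have ha : a ∈ Icc a b := ⟨le_rfl, ht.1.trans ht.2⟩
  simp only [Pi.sub_apply]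
  rw [intervalIntegral.integral_sub (hf.intervalIntegrable ha ht) (hg.intervalIntegrable ha ht),
    hf.2 t ht, hg.2 t ht]
  ring

theorem absolutelyContinuousOnInterval (hab : a ≤ b) (hf : IsW11On a b f f') :
    AbsolutelyContinuousOnInterval f a b := by
  have hF := (LipschitzWith.const (f a)).lipschitzOnWith.absolutelyContinuousOnInterval.fun_add
    ((hf.intervalIntegrable ⟨le_rfl, hab⟩ ⟨hab, le_rfl⟩)
      |>.absolutelyContinuousOnInterval_intervalIntegral left_mem_uIcc)
  exact hF.congr fun t ht => (hf.2 t (by rwa [uIcc_of_le hab] at ht)).symm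

theorem ae_hasDerivAt (hab : a ≤ b) (hf : IsW11On a b f f') :
    ∀ᵐ t ∂volume.restrict (Icc a b), HasDerivAt f (f' t) t := by
  rw [← Measure.restrict_congr_set Ioo_ae_eq_Icc]
  filter_upwards [ae_restrict_mem measurableSet_Ioo, ae_restrict_of_ae
    (hf.intervalIntegrable ⟨le_rfl, hab⟩ ⟨hab, le_rfl⟩).ae_hasDerivAt_integral] with t ht hderiv
  have htab : t ∈ uIcc a b := by rw [uIcc_of_le hab]; exact Ioo_subset_Icc_self ht
  refine ((hderiv htab a left_mem_uIcc).const_add (f a)).congr_of_eventuallyEq ?_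
  filter_upwards [Ioo_mem_nhds ht.1 ht.2] with s hs using hf.2 s (Ioo_subset_Icc_self hs)

theorem ae_deriv_max (hab : a ≤ b) (hf : IsW11On a b f f') (hg : IsW11On a b g g') :
    ∀ᵐ t ∂volume.restrict (Icc a b),
      deriv (fun s => max (f s) (g s)) t = (if f t < g t then g' t else f' t) ∧
        (f t = g t → f' t = g' t) := by
  have hM := ((hf.absolutelyContinuousOnInterval hab).max
    (hg.absolutelyContinuousOnInterval hab)).ae_differentiableAt
  rw [uIcc_of_le hab] at hM
  filter_upwards [hf.ae_hasDerivAt hab, hg.ae_hasDerivAt hab, ae_restrict_mem measurableSet_Icc,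
    ae_restrict_of_ae hM] with t hft hgt ht hMt
  have hMt' : DifferentiableAt ℝ (fun s => max (g s) (f s)) t := by
    simpa only [max_comm] using hMt ht
  have hdg : g t ≤ f t → deriv (fun s => max (f s) (g s)) t = f' t :=
    deriv_max_of_le hft (hMt ht)
  have hdf : f t ≤ g t → deriv (fun s => max (f s) (g s)) t = g' t := by
    simpa only [max_comm] using deriv_max_of_le hgt hMt'
  refine ⟨?_, fun heq => (hdg heq.ge).symm.trans (hdf heq.le)⟩
  split_ifs with hlt
  · exact hdf hlt.le
  · exact hdg (not_lt.1 hlt)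

theorem abs_sub_le (hf : IsW11On a b f f') {s t : ℝ} (hs : s ∈ Icc a b) (ht : t ∈ Icc a b) :
    |f t - f s| ≤ ∫ u in Icc a b, |f' u| := by
  have ha : a ∈ Icc a b := ⟨le_rfl, hs.1.trans hs.2⟩
  rw [hf.2 t ht, hf.2 s hs, add_sub_add_left_eq_sub,
    intervalIntegral.integral_interval_sub_left (hf.intervalIntegrable ha ht)
      (hf.intervalIntegrable ha hs)]
  calc |∫ u in s..t, f' u| ≤ ∫ u in uIoc s t, |f' u| := by
        simpa only [Real.norm_eq_abs] using
          intervalIntegral.norm_integral_le_integral_norm_uIoc (f := f') (μ := volume)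
    _ ≤ ∫ u in Icc a b, |f' u| :=
        setIntegral_mono_set hf.1.abs (Eventually.of_forall fun _ => abs_nonneg _)
          (uIoc_subset_uIcc.trans (uIcc_subset_Icc hs ht)).eventuallyLE

theorem continuousOn (hab : a ≤ b) (hf : IsW11On a b f f') : ContinuousOn f (Icc a b) := by
  simpa [uIcc_of_le hab] using (hf.absolutelyContinuousOnInterval hab).continuousOn

theorem integrableOn (hab : a ≤ b) (hf : IsW11On a b f f') : IntegrableOn f (Icc a b) :=
  (hf.continuousOn hab).integrableOn_compact isCompact_Icc

theorem abs_le (hab : a < b) (hf : IsW11On a b f f') {t : ℝ} (ht : t ∈ Icc a b) :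
    |f t| ≤ (∫ s in Icc a b, |f s|) / (b - a) + ∫ s in Icc a b, |f' s| := by
  have hlow : (|f t| - ∫ s in Icc a b, |f' s|) * (b - a) ≤ ∫ s in Icc a b, |f s| := by
    have := setIntegral_ge_of_const_le_real (μ := volume) measurableSet_Icc (by simp)
      (fun s hs => show |f t| - ∫ s in Icc a b, |f' s| ≤ |f s| by
        linarith [abs_sub_abs_le_abs_sub (f t) (f s), hf.abs_sub_le hs ht])
      (hf.integrableOn hab.le).abs
    simpa [measureReal_def, Real.volume_Icc, hab.le] using this
  linarith [(le_div_iff₀ (sub_pos.2 hab)).2 hlow]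

theorem tendsto_apply (hab : a < b) (hf : IsW11On a b f f') {F F' : ℕ → ℝ → ℝ}
    (hF : ∀ n, IsW11On a b (F n) (F' n))
    (hL1 : Tendsto (fun n => ∫ s in Icc a b, |F n s - f s|) atTop (𝓝 0))
    (hL1' : Tendsto (fun n => ∫ s in Icc a b, |F' n s - f' s|) atTop (𝓝 0))
    {t : ℝ} (ht : t ∈ Icc a b) : Tendsto (fun n => F n t) atTop (𝓝 (f t)) := by
  rw [← tendsto_sub_nhds_zero_iff]
  refine squeeze_zero_norm (fun n => ((hF n).sub hf).abs_le hab ht) ?_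
  simpa using (hL1.div_const (b - a)).add hL1'

theorem ae_eventually_abs_deriv_max_sub_le (hab : a < b) (hg : IsW11On a b g g')
    (hf : IsW11On a b f f') {F F' : ℕ → ℝ → ℝ} (hF : ∀ n, IsW11On a b (F n) (F' n))
    (hL1 : Tendsto (fun n => ∫ s in Icc a b, |F n s - f s|) atTop (𝓝 0))
    (hL1' : Tendsto (fun n => ∫ s in Icc a b, |F' n s - f' s|) atTop (𝓝 0)) :
    ∀ᵐ t ∂volume.restrict (Icc a b), ∀ᶠ n in atTop,
      |deriv (fun s => max (g s) (F n s)) t - deriv (fun s => max (g s) (f s)) t| ≤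
        |F' n t - f' t| := by
  filter_upwards [ae_all_iff.2 fun n => hg.ae_deriv_max hab.le (hF n),
    hg.ae_deriv_max hab.le hf, ae_restrict_mem measurableSet_Icc] with t hFt hft ht
  have hconv := hf.tendsto_apply hab hF hL1 hL1' ht
  rcases lt_trichotomy (g t) (f t) with hlt | heq | hgt
  · filter_upwards [hconv.eventually (lt_mem_nhds hlt)] with n hn
    rw [(hFt n).1, hft.1, if_pos hn, if_pos hlt]
  · refine Eventually.of_forall fun n => ?_
    rw [(hFt n).1, hft.1, if_neg heq.not_lt, hft.2 heq]
    split_ifs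
    · exact le_rfl
    · simp
  · filter_upwards [hconv.eventually (gt_mem_nhds hgt)] with n hn
    rw [(hFt n).1, hft.1, if_neg (not_lt.2 hn.le), if_neg (not_lt.2 hgt.le)]
    simp

end IsW11On

/-- The operator `M_x(t) = max{ω(t), x(t)}` is (sequentially) continuous from
`W^{1,1}([a,b])` into itself, with respect to the norm `‖x‖ = ‖x‖_{L¹} + ‖x'‖_{L¹}`. -/
theorem maxOp_continuous_W11 (a b : ℝ) (hab : a < b)
    (ω ω' : ℝ → ℝ) (hω : IsW11On a b ω ω')
    (x₀ x₀' : ℝ → ℝ) (hx₀ : IsW11On a b x₀ x₀')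
    (x : ℕ → ℝ → ℝ) (x' : ℕ → ℝ → ℝ) (hx : ∀ n, IsW11On a b (x n) (x' n))
    (hconv : Tendsto (fun n =>
        (∫ t in Icc a b, |x n t - x₀ t|) + ∫ t in Icc a b, |x' n t - x₀' t|)
      atTop (nhds 0)) :
    ∃ (g₀ : ℝ → ℝ) (g : ℕ → ℝ → ℝ),
      IsW11On a b (fun t => max (ω t) (x₀ t)) g₀ ∧
      (∀ n, IsW11On a b (fun t => max (ω t) (x n t)) (g n)) ∧
      Tendsto (fun n =>
          (∫ t in Icc a b, |max (ω t) (x n t) - max (ω t) (x₀ t)|) +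
            ∫ t in Icc a b, |g n t - g₀ t|)
        atTop (nhds 0) := by
  have hL1 : Tendsto (fun n => ∫ t in Icc a b, |x n t - x₀ t|) atTop (𝓝 0) :=
    squeeze_zero (fun n => integral_nonneg fun t => abs_nonneg _)
      (fun n => le_add_of_nonneg_right (integral_nonneg fun t => abs_nonneg _)) hconv
  have hL1' : Tendsto (fun n => ∫ t in Icc a b, |x' n t - x₀' t|) atTop (𝓝 0) :=
    squeeze_zero (fun n => integral_nonneg fun t => abs_nonneg _)
      (fun n => le_add_of_nonneg_left (integral_nonneg fun t => abs_nonneg _)) hconv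
  have hM₀ := ((hω.absolutelyContinuousOnInterval hab.le).max
    (hx₀.absolutelyContinuousOnInterval hab.le)).isW11On_deriv hab.le
  have hM := fun n => ((hω.absolutelyContinuousOnInterval hab.le).max
    ((hx n).absolutelyContinuousOnInterval hab.le)).isW11On_deriv hab.le
  refine ⟨_, _, hM₀, hM, ?_⟩
  rw [← add_zero (0 : ℝ)]
  refine Tendsto.add ?_ ?_
  · refine squeeze_zero (fun n => integral_nonneg fun t => abs_nonneg _) (fun n => ?_) hL1
    refine integral_mono_of_nonneg (Eventually.of_forall fun t => abs_nonneg _)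
      (((hx n).sub hx₀).integrableOn hab.le).abs (Eventually.of_forall fun t => ?_)
    simpa only [max_comm (ω t)] using abs_max_sub_max_le_abs (x n t) (x₀ t) (ω t)
  · refine tendsto_integral_abs_sub_of_eventually_le (fun n => (hM n).1) hM₀.1
      (fun n => (hx n).1) hx₀.1 (hx₀.1.sub hω.1).abs (fun n => ?_) ?_ hL1'
    · filter_upwards [hω.ae_deriv_max hab.le (hx n), hω.ae_deriv_max hab.le hx₀]
        with t hn h₀
      rw [hn.1, h₀.1]
      exact abs_ite_sub_ite_le _ _ _ _ _
    · exact hω.ae_eventually_abs_deriv_max_sub_le hab hx₀ hx hL1 hL1'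
end

section
/- Let Φ : ℝ → ℝ be a strictly increasing homeomorphism, ψ : (0,∞) → (0,∞) measurable with 1/ψ ∈ L¹_loc(0,∞) and ∫^∞ ds/ψ(s) = ∞, l ∈ L¹([a,b]) nonnegative, μ ∈ L^q([a,b]) nonnegative with 1 < q ≤ ∞, and M > 0. Let 0 < Φ(N) < Φ(L) with ∫_{Φ(N)}^{Φ(L)} ds/ψ(s) > ‖l‖_{L¹} + ‖μ‖_{L^q}(2M)^{(q−1)/q}. Suppose u ∈ W^{1,1}([t₁,t₂]) ⊆ W^{1,1}([a,b]) satisfies ‖u‖_{L^∞} ≤ M, u' > 0 a.e. on (t₁,t₂), v := Φ ∘ K_u is absolutely continuous on [t₁,t₂] with v(t₁) = Φ(N), v(t₂) = Φ(L), Φ(N) ≤ v(t) on (t₁,t₂), and |v'(t)| ≤ ψ(v(t))·(l(t) + μ(t)(u'(t))^{(q−1)/q}) a.e. Then a contradiction follows; hence no such u exists. -/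
/-!
Set `g = 1/ψ`. Pushing the measure `|v'(t)| dt` on `[t₁, t₂]` forward along `v` gives a measure
that dominates Lebesgue measure on `[v t₁, v t₂]`: against bounded continuous test functions this
is the change of variables formula for the absolutely continuous function `v`, and inner
regularity of finite measures on `ℝ` passes from closed sets to all Borel sets. Hence
`∫_{Φ(N)}^{Φ(L)} g ≤ ∫_{t₁}^{t₂} g(v) |v'|`, which the Nagumo condition bounds by
`∫ l + ∫ μ (u')^{1-1/q}`. Hölder's inequality with exponents `q` and `(1 - 1/q)⁻¹` bounds the
second integral by `‖μ‖_q (∫ u')^{1-1/q} = ‖μ‖_q (u t₂ - u t₁)^{1-1/q} ≤ ‖μ‖_q (2M)^{1-1/q}`,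
contradicting the choice of `L`.
-/

open MeasureTheory Set
open scoped ENNReal

open Filter
open scoped NNReal Topology BoundedContinuousFunction

theorem LipschitzWith.comp_absolutelyContinuousOnInterval {X Y : Type*} [PseudoMetricSpace X]
    [PseudoMetricSpace Y] {K : ℝ≥0} {G : X → Y} (hG : LipschitzWith K G) {v : ℝ → X} {a b : ℝ}
    (hv : AbsolutelyContinuousOnInterval v a b) : AbsolutelyContinuousOnInterval (G ∘ v) a b := by
  have hKv := Filter.Tendsto.const_mul (K : ℝ) hv
  rw [mul_zero] at hKv
  refine squeeze_zero (fun _ ↦ Finset.sum_nonneg fun _ _ ↦ dist_nonneg) (fun E ↦ ?_) hKv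
  rw [Finset.mul_sum]
  exact Finset.sum_le_sum fun i _ ↦ hG.dist_le_mul _ _

theorem MeasureTheory.Measure.le_of_forall_lintegral_le {X : Type*} [MeasurableSpace X]
    [TopologicalSpace X] [HasOuterApproxClosed X] [OpensMeasurableSpace X] {μ ν : Measure X}
    [IsFiniteMeasure μ] [μ.WeaklyRegular] [IsFiniteMeasure ν]
    (h : ∀ f : X →ᵇ ℝ≥0, ∫⁻ x, f x ∂μ ≤ ∫⁻ x, f x ∂ν) : μ ≤ ν := by
  have hclosed : ∀ F, IsClosed F → μ F ≤ ν F := fun F hF ↦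
    le_of_tendsto_of_tendsto' (HasOuterApproxClosed.tendsto_lintegral_apprSeq hF μ)
      (HasOuterApproxClosed.tendsto_lintegral_apprSeq hF ν) fun n ↦ h _
  refine Measure.le_iff.2 fun s hs ↦ ?_
  rw [Measure.WeaklyRegular.innerRegular_measurable.measure_eq_iSup ⟨hs, measure_ne_top μ s⟩]
  exact iSup₂_le fun F hFs ↦ iSup_le fun hF ↦ (hclosed F hF).trans (measure_mono hFs)

theorem ENNReal.ofReal_one_sub_inv_toReal {q : ℝ≥0∞} (hq : 1 ≤ q) :
    ENNReal.ofReal (1 - q.toReal⁻¹) = 1 - q⁻¹ := by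
  have hq' : q⁻¹ ≤ 1 := ENNReal.inv_le_one.2 hq
  rw [← ENNReal.toReal_inv, ← ENNReal.toReal_one, ← ENNReal.toReal_sub_of_le hq' one_ne_top,
    ENNReal.ofReal_toReal (ne_top_of_le_ne_top one_ne_top tsub_le_self)]

theorem ENNReal.one_sub_inv_ne_zero {q : ℝ≥0∞} (hq : 1 < q) : 1 - q⁻¹ ≠ 0 :=
  (tsub_pos_of_lt (ENNReal.inv_lt_one.2 hq)).ne'

theorem ENNReal.one_sub_inv_toReal_pos {q : ℝ≥0∞} (hq : 1 < q) : 0 < 1 - q.toReal⁻¹ :=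
  ENNReal.ofReal_pos.1 <| (ENNReal.ofReal_one_sub_inv_toReal hq.le).symm ▸
    pos_iff_ne_zero.2 (ENNReal.one_sub_inv_ne_zero hq)

/-- Hölder's inequality for `f ∈ L^q` against `w ^ (1 - 1/q) ∈ L^{(1 - 1/q)⁻¹}`. -/
theorem MeasureTheory.lintegral_enorm_mul_rpow_le {α : Type*} [MeasurableSpace α]
    {ν : Measure α} {q : ℝ≥0∞} (hq : 1 < q) {f w : α → ℝ} (hf : AEStronglyMeasurable f ν)
    (hw : AEStronglyMeasurable w ν) (hw0 : 0 ≤ᵐ[ν] w) :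
    ∫⁻ t, ‖f t * w t ^ (1 - q.toReal⁻¹)‖ₑ ∂ν ≤
      eLpNorm f q ν * eLpNorm w 1 ν ^ (1 - q.toReal⁻¹) := by
  set θ := 1 - q.toReal⁻¹
  have hθ : ENNReal.ofReal θ = 1 - q⁻¹ := ENNReal.ofReal_one_sub_inv_toReal hq.le
  have hθpos : 0 < θ := ENNReal.one_sub_inv_toReal_pos hq
  have : ENNReal.HolderConjugate q (1 - q⁻¹)⁻¹ := .inv_one_sub_inv' hq.le
  have hr : (1 - q⁻¹)⁻¹ * ENNReal.ofReal θ = 1 := by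
    rw [hθ, ENNReal.inv_mul_cancel (ENNReal.one_sub_inv_ne_zero hq)
      (ne_top_of_le_ne_top ENNReal.one_ne_top tsub_le_self)]
  have hwθ : eLpNorm (fun t ↦ w t ^ θ) (1 - q⁻¹)⁻¹ ν = eLpNorm w 1 ν ^ θ :=
    calc eLpNorm (fun t ↦ w t ^ θ) (1 - q⁻¹)⁻¹ ν
        = eLpNorm (fun t ↦ ‖w t‖ ^ θ) (1 - q⁻¹)⁻¹ ν :=
          eLpNorm_congr_ae (hw0.mono fun t ht ↦ by simp only [Real.norm_of_nonneg ht])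
      _ = eLpNorm w 1 ν ^ θ := by rw [eLpNorm_norm_rpow w hθpos, hr]
  calc ∫⁻ t, ‖f t * w t ^ θ‖ₑ ∂ν = eLpNorm (f • fun t ↦ w t ^ θ) 1 ν :=
        eLpNorm_one_eq_lintegral_enorm.symm
    _ ≤ eLpNorm f q ν * eLpNorm (fun t ↦ w t ^ θ) (1 - q⁻¹)⁻¹ ν :=
        eLpNorm_smul_le_mul_eLpNorm
          ((Real.continuous_rpow_const hθpos.le).comp_aestronglyMeasurable hw) hf
    _ = eLpNorm f q ν * eLpNorm w 1 ν ^ θ := by rw [hwθ]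

namespace IsW11On

variable {a b : ℝ} {v v' : ℝ → ℝ}

theorem intervalIntegrable_s9 (hab : a ≤ b) (hv : IsW11On a b v v') :
    IntervalIntegrable v' volume a b :=
  (intervalIntegrable_iff_integrableOn_Icc_of_le hab).2 hv.1

theorem absolutelyContinuousOnInterval_s9 (hab : a ≤ b) (hv : IsW11On a b v v') :
    AbsolutelyContinuousOnInterval v a b := by
  have hF := (hv.intervalIntegrable_s9 hab).absolutelyContinuousOnInterval_intervalIntegral
    (c := a) left_mem_uIcc
  refine hF.congr' (eventually_inf_principal.2 (Eventually.of_forall fun E hE ↦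
    Finset.sum_congr rfl fun i hi ↦ ?_))
  obtain ⟨hx, hy⟩ := hE.1 i hi
  rw [uIcc_of_le hab] at hx hy
  simp only [hv.2 _ hx, hv.2 _ hy, dist_add_left]

theorem aemeasurable_restrict_Ioc (hab : a ≤ b) (hv : IsW11On a b v v') :
    AEMeasurable v (volume.restrict (Ioc a b)) := by
  have hcont := (hv.absolutelyContinuousOnInterval_s9 hab).continuousOn
  rw [uIcc_of_le hab] at hcont
  exact (hcont.mono Ioc_subset_Icc_self).aemeasurable measurableSet_Ioc

theorem ae_hasDerivAt_s9 (hab : a ≤ b) (hv : IsW11On a b v v') :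
    ∀ᵐ t, t ∈ Ioo a b → HasDerivAt v (v' t) t := by
  filter_upwards [(hv.intervalIntegrable_s9 hab).ae_hasDerivAt_integral] with t ht hmem
  refine ((ht (by rw [uIcc_of_le hab]; exact Ioo_subset_Icc_self hmem) a left_mem_uIcc).const_add
    (v a)).congr_of_eventuallyEq ?_
  filter_upwards [Icc_mem_nhds hmem.1 hmem.2] with s hs using hv.2 s hs

theorem lintegral_map_withDensity (hab : a ≤ b) (hv : IsW11On a b v v') {g : ℝ → ℝ≥0∞}
    (hg : Measurable g) :
    ∫⁻ x, g x ∂((volume.restrict (Ioc a b)).withDensity fun t ↦ ‖v' t‖ₑ).map v =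
      ∫⁻ t in Ioc a b, ‖v' t‖ₑ * g (v t) := by
  have hvm := hv.aemeasurable_restrict_Ioc hab
  rw [lintegral_map' hg.aemeasurable (hvm.mono_ac (withDensity_absolutelyContinuous _ _)),
    lintegral_withDensity_eq_lintegral_mul₀ (g := fun t ↦ g (v t))
      (hv.1.mono_set Ioc_subset_Icc_self).1.enorm (hg.comp_aemeasurable hvm)]
  rfl

theorem integral_comp_mul_eq (hab : a ≤ b) (hv : IsW11On a b v v') {f : ℝ → ℝ}
    (hf : Continuous f) {C : ℝ≥0} (hfC : ∀ x, ‖f x‖₊ ≤ C) :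
    ∫ t in a..b, f (v t) * v' t = ∫ x in v a..v b, f x := by
  set G := fun x ↦ ∫ y in v a..x, f y
  have hG : ∀ x, HasDerivAt G (f x) x := fun x ↦
    (hf.integral_hasStrictDerivAt _ _).hasDerivAt
  have hGlip : LipschitzWith C G := lipschitzWith_of_nnnorm_deriv_le
    (fun x ↦ (hG x).differentiableAt) fun x ↦ (hG x).deriv ▸ hfC x
  have hderiv : ∀ᵐ t, t ∈ uIoc a b → f (v t) * v' t = deriv (G ∘ v) t := by
    filter_upwards [hv.ae_hasDerivAt_s9 hab, Measure.ae_ne volume b] with t ht htb hmem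
    rw [uIoc_of_le hab] at hmem
    exact (((hG (v t)).comp t (ht ⟨hmem.1, lt_of_le_of_ne hmem.2 htb⟩)).deriv).symm
  calc ∫ t in a..b, f (v t) * v' t = ∫ t in a..b, deriv (G ∘ v) t :=
        intervalIntegral.integral_congr_ae hderiv
    _ = G (v b) - G (v a) :=
        (hGlip.comp_absolutelyContinuousOnInterval
          (hv.absolutelyContinuousOnInterval_s9 hab)).integral_deriv_eq_sub
    _ = ∫ x in v a..v b, f x := by simp [G]

theorem volume_restrict_uIoc_le_map (hab : a ≤ b) (hv : IsW11On a b v v') :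
    volume.restrict (uIoc (v a) (v b)) ≤
      ((volume.restrict (Ioc a b)).withDensity fun t ↦ ‖v' t‖ₑ).map v := by
  have hv'Ioc : IntegrableOn v' (Ioc a b) := hv.1.mono_set Ioc_subset_Icc_self
  have : IsFiniteMeasure ((volume.restrict (Ioc a b)).withDensity fun t ↦ ‖v' t‖ₑ) :=
    isFiniteMeasure_withDensity hv'Ioc.2.ne
  have : IsFiniteMeasure (volume.restrict (uIoc (v a) (v b))) := by
    rw [uIoc]; infer_instance
  refine Measure.le_of_forall_lintegral_le fun f ↦ ?_
  have hf : Continuous fun x ↦ (f x : ℝ) := NNReal.continuous_coe.comp f.continuous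
  obtain ⟨C, hC⟩ := f.isBounded_range.bddAbove
  have hfC : ∀ x, ‖(f x : ℝ)‖₊ ≤ C := fun x ↦ by
    rw [NNReal.nnnorm_eq]; exact hC ⟨x, rfl⟩
  have hfm : Measurable fun x ↦ (f x : ℝ≥0∞) := f.continuous.measurable.coe_nnreal_ennreal
  rw [hv.lintegral_map_withDensity hab hfm]
  calc ∫⁻ x in uIoc (v a) (v b), f x
      = ENNReal.ofReal (∫ x in uIoc (v a) (v b), (f x : ℝ)) :=
        lintegral_coe_eq_integral _ (hf.integrableOn_uIcc.mono_set uIoc_subset_uIcc)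
    _ = ‖∫ x in v a..v b, (f x : ℝ)‖ₑ := by
        rw [← ofReal_norm, intervalIntegral.norm_integral_eq_norm_integral_uIoc,
          Real.norm_of_nonneg (integral_nonneg fun x ↦ (f x).coe_nonneg)]
    _ = ‖∫ t in Ioc a b, (f (v t) : ℝ) * v' t‖ₑ := by
        rw [← hv.integral_comp_mul_eq hab hf hfC, intervalIntegral.integral_of_le hab]
    _ ≤ ∫⁻ t in Ioc a b, ‖(f (v t) : ℝ) * v' t‖ₑ := enorm_integral_le_lintegral_enorm _
    _ = ∫⁻ t in Ioc a b, ‖v' t‖ₑ * f (v t) := by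
        congr 1 with t
        rw [enorm_mul, mul_comm, Real.enorm_of_nonneg (f (v t)).coe_nonneg,
          ENNReal.ofReal_coe_nnreal]

theorem setLIntegral_uIoc_le (hab : a ≤ b) (hv : IsW11On a b v v') {g : ℝ → ℝ≥0∞}
    (hg : Measurable g) :
    ∫⁻ x in uIoc (v a) (v b), g x ≤ ∫⁻ t in Ioc a b, g (v t) * ‖v' t‖ₑ := by
  calc ∫⁻ x in uIoc (v a) (v b), g x
      ≤ ∫⁻ x, g x ∂((volume.restrict (Ioc a b)).withDensity fun t ↦ ‖v' t‖ₑ).map v :=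
        lintegral_mono' (hv.volume_restrict_uIoc_le_map hab) le_rfl
    _ = ∫⁻ t in Ioc a b, g (v t) * ‖v' t‖ₑ := by
        simp only [hv.lintegral_map_withDensity hab hg, mul_comm]

theorem ofReal_integral_le_lintegral (hab : a ≤ b) (hv : IsW11On a b v v') {g : ℝ → ℝ}
    (hg : Measurable g) (hvab : v a ≤ v b) (hgi : IntegrableOn g (Ioc (v a) (v b)))
    (hg0 : ∀ x ∈ Ioc (v a) (v b), 0 ≤ g x) :
    ENNReal.ofReal (∫ x in v a..v b, g x) ≤ ∫⁻ t in Ioc a b, ENNReal.ofReal (g (v t)) * ‖v' t‖ₑ := by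
  rw [intervalIntegral.integral_of_le hvab,
    ofReal_integral_eq_lintegral_ofReal hgi ((ae_restrict_mem measurableSet_Ioc).mono hg0),
    ← uIoc_of_le hvab]
  exact hv.setLIntegral_uIoc_le hab hg.ennreal_ofReal

theorem eLpNorm_one_eq_ofReal_sub (hab : a ≤ b) (hv : IsW11On a b v v')
    (hv' : 0 ≤ᵐ[volume.restrict (Ioc a b)] v') :
    eLpNorm v' 1 (volume.restrict (Ioc a b)) = ENNReal.ofReal (v b - v a) := by
  rw [eLpNorm_one_eq_lintegral_enorm, hv.2 b (right_mem_Icc.2 hab), add_sub_cancel_left,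
    intervalIntegral.integral_of_le hab,
    ofReal_integral_eq_lintegral_ofReal (hv.1.mono_set Ioc_subset_Icc_self) hv']
  exact lintegral_congr_ae (hv'.mono fun t ht ↦ Real.enorm_of_nonneg ht)

theorem lintegral_enorm_mul_rpow_deriv_le (hab : a ≤ b) (hv : IsW11On a b v v')
    (hv' : 0 ≤ᵐ[volume.restrict (Ioc a b)] v') {q : ℝ≥0∞} (hq : 1 < q) {f : ℝ → ℝ}
    (hf : AEStronglyMeasurable f (volume.restrict (Ioc a b))) :
    ∫⁻ t in Ioc a b, ‖f t * v' t ^ (1 - q.toReal⁻¹)‖ₑ ≤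
      eLpNorm f q (volume.restrict (Ioc a b)) * ENNReal.ofReal (v b - v a) ^ (1 - q.toReal⁻¹) :=
  hv.eLpNorm_one_eq_ofReal_sub hab hv' ▸ lintegral_enorm_mul_rpow_le hq hf
    (hv.1.mono_set Ioc_subset_Icc_self).1 hv'

end IsW11On

theorem ENNReal.ofReal_one_div_mul_enorm_le {p y r s : ℝ} (hp : 0 < p)
    (h : |y| ≤ p * (r + s)) : ENNReal.ofReal (1 / p) * ‖y‖ₑ ≤ ENNReal.ofReal r + ‖s‖ₑ := by
  have hy : 1 / p * |y| ≤ r + s := by rw [one_div_mul_eq_div, div_le_iff₀ hp]; linarith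
  rw [← ofReal_norm, ← ENNReal.ofReal_mul (by positivity), ← ofReal_norm]
  refine (ENNReal.ofReal_le_ofReal hy).trans (ENNReal.ofReal_add_le.trans ?_)
  gcongr
  exact Real.le_norm_self _

theorem nagumo_contradiction_general (a b t₁ t₂ M N L : ℝ)
    (ht₁ : a ≤ t₁) (ht : t₁ < t₂) (ht₂ : t₂ ≤ b) (hM : 0 < M)
    (Φ : ℝ → ℝ)
    (ψ : ℝ → ℝ) (hψmeas : Measurable ψ) (hψpos : ∀ s > (0:ℝ), 0 < ψ s)
    (hψloc : ∀ c d : ℝ, 0 < c → c ≤ d → IntegrableOn (fun s => 1 / ψ s) (Icc c d))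
    (l : ℝ → ℝ) (hl : IntegrableOn l (Icc a b))
    (hl0 : ∀ t ∈ Icc a b, 0 ≤ l t)
    (q : ℝ≥0∞) (hq : 1 < q)
    (μ : ℝ → ℝ) (hμ : MemLp μ q (volume.restrict (Icc a b)))
    (hN : 0 < Φ N) (hNL : Φ N < Φ L)
    (hL : (∫ t in Icc a b, l t) +
        (eLpNorm μ q (volume.restrict (Icc a b))).toReal *
          (2 * M) ^ (1 - (q.toReal)⁻¹)
      < ∫ s in (Φ N)..(Φ L), 1 / ψ s)
    (u u' : ℝ → ℝ) (hu : IsW11On t₁ t₂ u u')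
    (hub : ∀ t ∈ Icc t₁ t₂, |u t| ≤ M)
    (hu'pos : ∀ᵐ t ∂(volume.restrict (Ioo t₁ t₂)), 0 < u' t)
    (v v' : ℝ → ℝ) (hv : IsW11On t₁ t₂ v v')
    (hv₁ : v t₁ = Φ N) (hv₂ : v t₂ = Φ L)
    (hvge : ∀ t ∈ Icc t₁ t₂, Φ N ≤ v t)
    (hNag : ∀ᵐ t ∂(volume.restrict (Ioo t₁ t₂)),
        |v' t| ≤ ψ (v t) * (l t + μ t * (u' t) ^ (1 - (q.toReal)⁻¹))) :
    False := by
  set θ := 1 - q.toReal⁻¹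
  have hsub : Ioc t₁ t₂ ⊆ Icc a b := Ioc_subset_Icc_self.trans (Icc_subset_Icc ht₁ ht₂)
  rw [Measure.restrict_congr_set Ioo_ae_eq_Ioc] at hu'pos hNag
  rw [← hv₁, ← hv₂] at hL hNL
  rw [← hv₁] at hN hvge
  have hpointwise : ∀ᵐ t ∂volume.restrict (Ioc t₁ t₂), ENNReal.ofReal (1 / ψ (v t)) * ‖v' t‖ₑ
      ≤ ENNReal.ofReal (l t) + ‖μ t * u' t ^ θ‖ₑ := by
    filter_upwards [hNag, ae_restrict_mem measurableSet_Ioc] with t ht hmem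
    exact ENNReal.ofReal_one_div_mul_enorm_le
      (hψpos _ (hN.trans_le (hvge t (Ioc_subset_Icc_self hmem)))) ht
  have hl' : ∫⁻ t in Ioc t₁ t₂, ENNReal.ofReal (l t) ≤ ENNReal.ofReal (∫ t in Icc a b, l t) := by
    rw [ofReal_integral_eq_lintegral_ofReal hl ((ae_restrict_mem measurableSet_Icc).mono hl0)]
    exact lintegral_mono_set hsub
  have hholder : ∫⁻ t in Ioc t₁ t₂, ‖μ t * u' t ^ θ‖ₑ
      ≤ eLpNorm μ q (volume.restrict (Icc a b)) * ENNReal.ofReal (2 * M) ^ θ := by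
    have hθ : 0 ≤ θ := (ENNReal.one_sub_inv_toReal_pos hq).le
    have hu₁₂ : u t₂ - u t₁ ≤ 2 * M := by
      linarith [abs_le.1 (hub t₁ (left_mem_Icc.2 ht.le)), abs_le.1 (hub t₂ (right_mem_Icc.2 ht.le))]
    refine (hu.lintegral_enorm_mul_rpow_deriv_le ht.le (hu'pos.mono fun t ht ↦ ht.le) hq
      (hμ.mono_measure (Measure.restrict_mono hsub le_rfl)).1).trans ?_
    gcongr
  have hA : 0 ≤ (∫ t in Icc a b, l t) +
      (eLpNorm μ q (volume.restrict (Icc a b))).toReal * (2 * M) ^ θ :=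
    add_nonneg (setIntegral_nonneg measurableSet_Icc hl0) (by positivity)
  refine hL.not_ge ((ENNReal.ofReal_le_ofReal_iff hA).1 ?_)
  calc ENNReal.ofReal (∫ s in v t₁..v t₂, 1 / ψ s)
      ≤ ∫⁻ t in Ioc t₁ t₂, ENNReal.ofReal (1 / ψ (v t)) * ‖v' t‖ₑ :=
        hv.ofReal_integral_le_lintegral ht.le (hψmeas.const_div 1) hNL.le
          ((hψloc _ _ hN hNL.le).mono_set Ioc_subset_Icc_self)
          fun s hs ↦ (one_div_pos.2 (hψpos s (hN.trans hs.1))).le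
    _ ≤ (∫⁻ t in Ioc t₁ t₂, ENNReal.ofReal (l t)) + ∫⁻ t in Ioc t₁ t₂, ‖μ t * u' t ^ θ‖ₑ := by
        rw [← lintegral_add_left' (hl.mono_set hsub).aemeasurable.ennreal_ofReal]
        exact lintegral_mono_ae hpointwise
    _ ≤ ENNReal.ofReal (∫ t in Icc a b, l t)
          + eLpNorm μ q (volume.restrict (Icc a b)) * ENNReal.ofReal (2 * M) ^ θ :=
        add_le_add hl' hholder
    _ = _ := by
        rw [ENNReal.ofReal_add (setIntegral_nonneg measurableSet_Icc hl0) (by positivity),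
          ENNReal.ofReal_mul ENNReal.toReal_nonneg, ENNReal.ofReal_toReal hμ.eLpNorm_ne_top,
          ENNReal.ofReal_rpow_of_pos (by positivity)]

/-- Nagumo-type a priori bound: under the stated hypotheses (choice of `L` via the
divergent integral of `1/ψ`, Nagumo growth of `v' = (Φ∘K_u)'`), no absolutely
continuous `v` can climb from `Φ(N)` to `Φ(L)` on `[t₁,t₂]`; a contradiction follows. -/
theorem nagumo_contradiction (a b t₁ t₂ M N L : ℝ) (hab : a < b)
    (ht₁ : a ≤ t₁) (ht : t₁ < t₂) (ht₂ : t₂ ≤ b) (hM : 0 < M)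
    (Φ : ℝ → ℝ) (hΦmono : StrictMono Φ) (hΦcont : Continuous Φ)
    (hΦbij : Function.Bijective Φ)
    (ψ : ℝ → ℝ) (hψmeas : Measurable ψ) (hψpos : ∀ s > (0:ℝ), 0 < ψ s)
    (hψloc : ∀ c d : ℝ, 0 < c → c ≤ d → IntegrableOn (fun s => 1 / ψ s) (Icc c d))
    (hψdiv : ∀ c > (0:ℝ), ¬ IntegrableOn (fun s => 1 / ψ s) (Ioi c))
    (l : ℝ → ℝ) (hl : IntegrableOn l (Icc a b))
    (hl0 : ∀ t ∈ Icc a b, 0 ≤ l t)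
    (q : ℝ≥0∞) (hq : 1 < q)
    (μ : ℝ → ℝ) (hμ : MemLp μ q (volume.restrict (Icc a b)))
    (hμ0 : ∀ t ∈ Icc a b, 0 ≤ μ t)
    (hN : 0 < Φ N) (hNL : Φ N < Φ L)
    (hL : (∫ t in Icc a b, l t) +
        (eLpNorm μ q (volume.restrict (Icc a b))).toReal *
          (2 * M) ^ (1 - (q.toReal)⁻¹)
      < ∫ s in (Φ N)..(Φ L), 1 / ψ s)
    (u u' : ℝ → ℝ) (hu : IsW11On t₁ t₂ u u')
    (hub : ∀ t ∈ Icc t₁ t₂, |u t| ≤ M)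
    (hu'pos : ∀ᵐ t ∂(volume.restrict (Ioo t₁ t₂)), 0 < u' t)
    (v v' : ℝ → ℝ) (hv : IsW11On t₁ t₂ v v')
    (hv₁ : v t₁ = Φ N) (hv₂ : v t₂ = Φ L)
    (hvge : ∀ t ∈ Icc t₁ t₂, Φ N ≤ v t)
    (hNag : ∀ᵐ t ∂(volume.restrict (Ioo t₁ t₂)),
        |v' t| ≤ ψ (v t) * (l t + μ t * (u' t) ^ (1 - (q.toReal)⁻¹))) :
    False :=
  nagumo_contradiction_general a b t₁ t₂ M N L ht₁ ht ht₂ hM Φ ψ hψmeas hψpos hψloc l hl hl0 q hq μ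
    hμ hN hNL hL u u' hu hub hu'pos v v' hv hv₁ hv₂ hvge hNag
end
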